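/- arXiv:2001.05546 — 2 statements merged into one kernel-verified Lean document; each statement's English description precedes it below -/
import Mathlib

section
/- Define f(n,k) = Σ_{j∈ℤ} (−1)^j q^{j(3j−1)/2} [n choose k−j]_q [n choose k+j]_q. Then f(n,k) = [n choose k]_q for all n ≥ 0 and all k. -/
open LaurentPolynomial

/-- The Gaussian (q-)binomial coefficient `[n choose k]_q`, as a Laurent polynomial in `q`,
with the convention that it vanishes for `k < 0` or `k > n`.  Defined via the standard
Pascal-type recurrence `[n+1, k] = q^k [n, k] + [n, k-1]`. -/
noncomputable def qb : ℕ → ℤ → LaurentPolynomial ℤ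
  | 0, k => if k = 0 then 1 else 0
  | (n+1), k => T k * qb n k + qb n (k-1)

/-- The variable `q`. -/
noncomputable def q : LaurentPolynomial ℤ := T 1

/-- `f n k = Σ_{j∈ℤ} (−1)^j q^{j(3j−1)/2} [n choose k−j]_q [n choose k+j]_q`. -/
noncomputable def f (n : ℕ) (k : ℤ) : LaurentPolynomial ℤ :=
  ∑ᶠ j : ℤ, (-1 : LaurentPolynomial ℤ) ^ j.natAbs * T (j * (3 * j - 1) / 2) *
    qb n (k - j) * qb n (k + j)

/-!
Write `S(x, y, t) = Σ_j (-1)^j q^(j(3j-1)/2 + t j) [n, x-j] [n, y+j]`, so that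
`f(n, k) = S(k, k, 0)`.  Substituting `j ↦ c - j` gives
`S(x, y, t) = ± q^(…) S(y+c, x-c, 1-3c-t)`: for `c = 0` this swaps `x` and `y` while
`t ↦ 1 - t`, and for `c = ±1` it shows that `S(y+1, y, -1)` and `S(x, x+1, 2)` are their own
negatives, hence vanish.  Expanding `[n+1, k+1-j]` by the two Pascal recurrences writes
`(1 - q^(k+1)) f(n+1, k+1)` as a combination of such sums in which everything cancels except
`(1 - q^(n+1)) f(n, k)`.  The Gaussian binomials obey the same recurrence and
`f(n, 0) = 1 = [n, 0]`, so induction on `n` and cancelling `1 - q^(k+1)` in the domain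
`ℤ[q, q⁻¹]` give the identity.
-/

open Finset

instance LaurentPolynomial.instCharZero {R : Type*} [CommSemiring R] [CharZero R] :
    CharZero R[T;T⁻¹] :=
  charZero_of_injective_ringHom Polynomial.toLaurent_injective

lemma one_sub_T_ne_zero {R : Type*} [Ring R] [Nontrivial R] {m : ℤ} (hm : m ≠ 0) :
    (1 - T m : R[T;T⁻¹]) ≠ 0 := by
  rw [sub_ne_zero, ← T_zero]
  exact fun h => hm (AddMonoidAlgebra.single_left_injective one_ne_zero h).symm

lemma qb_succ (n : ℕ) (k : ℤ) : qb (n + 1) k = T k * qb n k + qb n (k - 1) := rfl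

lemma qb_eq_zero_of_neg (n : ℕ) {k : ℤ} (hk : k < 0) : qb n k = 0 := by
  induction n generalizing k with
  | zero => simp [qb, hk.ne]
  | succ n ih => rw [qb_succ, ih hk, ih (by omega), mul_zero, add_zero]

lemma qb_zero_right (n : ℕ) : qb n 0 = 1 := by
  induction n with
  | zero => simp [qb]
  | succ n ih => rw [qb_succ, ih, qb_eq_zero_of_neg n (by norm_num), T_zero, mul_one, add_zero]

lemma qb_succ' (n : ℕ) (k : ℤ) : qb (n + 1) k = qb n k + T (n + 1 - k) * qb n (k - 1) := by
  induction n generalizing k with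
  | zero =>
    obtain rfl | rfl | hk := (by omega : k = 0 ∨ k = 1 ∨ (k ≠ 0 ∧ k ≠ 1))
    · simp [qb]
    · simp [qb]
    · simp [qb, hk.1, hk.2, sub_eq_zero]
  | succ n ih =>
    conv_lhs => rw [qb_succ (n + 1) k, ih k, ih (k - 1)]
    rw [qb_succ n k, qb_succ n (k - 1), sub_sub,
      show (n : ℤ) + 1 - (k - 1) = ↑(n + 1) + 1 - k by push_cast; ring]
    have hT : (T k * T (n + 1 - k) : ℤ[T;T⁻¹]) = T (↑(n + 1) + 1 - k) * T (k - 1) := by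
      rw [← T_add, ← T_add]; push_cast; ring_nf
    linear_combination qb n (k - 1) * hT

lemma one_sub_T_mul_qb_succ (n : ℕ) (k : ℤ) :
    (1 - T (k + 1)) * qb (n + 1) (k + 1) = (1 - T (n + 1)) * qb n k := by
  have hT : (T (k + 1) * T (n + 1 - (k + 1)) : ℤ[T;T⁻¹]) = T (n + 1) := by
    rw [← T_add]; ring_nf
  have h1 := qb_succ n (k + 1)
  have h2 := qb_succ' n (k + 1)
  simp only [add_sub_cancel_right] at h1 h2
  linear_combination h1 - T (k + 1) * h2 - qb n k * hT

section Pentagonal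

variable {R : Type*} [CommRing R]

noncomputable def pentWeight (j : ℤ) : R[T;T⁻¹] := (-1) ^ j.natAbs * T (j * (3 * j - 1) / 2)

lemma two_mul_pentagonal_div_two (j : ℤ) : 2 * (j * (3 * j - 1) / 2) = j * (3 * j - 1) := by
  refine Int.mul_ediv_cancel' (Even.two_dvd ?_)
  rw [show j * (3 * j - 1) = j * (j - 1) + 2 * (j * j) by ring]
  exact j.even_mul_pred_self.add (even_two_mul _)

lemma pentWeight_sub (c j : ℤ) :
    (pentWeight (c - j) : R[T;T⁻¹]) = pentWeight c * pentWeight j * T (j - 3 * c * j) := by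
  have hexp : (c - j) * (3 * (c - j) - 1) / 2
      = c * (3 * c - 1) / 2 + j * (3 * j - 1) / 2 + (j - 3 * c * j) := by
    linarith [two_mul_pentagonal_div_two (c - j), two_mul_pentagonal_div_two c,
      two_mul_pentagonal_div_two j]
  simp only [pentWeight, ← Int.coe_negOnePow, Int.negOnePow_sub, Units.val_mul, Int.cast_mul,
    hexp, T_add]
  ring

lemma pentWeight_zero : (pentWeight 0 : R[T;T⁻¹]) = 1 := by simp [pentWeight]

lemma pentWeight_one : (pentWeight 1 : R[T;T⁻¹]) = -T 1 := by simp [pentWeight]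

lemma pentWeight_neg_one : (pentWeight (-1) : R[T;T⁻¹]) = -T 2 := by simp [pentWeight]

noncomputable def pentTerm (g : ℤ → R[T;T⁻¹]) (x y t j : ℤ) : R[T;T⁻¹] :=
  pentWeight j * T (t * j) * g (x - j) * g (y + j)

noncomputable def pentSum (g : ℤ → R[T;T⁻¹]) (x y t : ℤ) : R[T;T⁻¹] :=
  ∑ᶠ j, pentTerm g x y t j

lemma pentSum_reflect (g : ℤ → R[T;T⁻¹]) (x y t c : ℤ) :
    pentSum g x y t = pentWeight c * T (t * c) * pentSum g (y + c) (x - c) (1 - 3 * c - t) := by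
  have hunit : IsUnit (pentWeight c * T (t * c) : R[T;T⁻¹]) :=
    ((isUnit_neg_one.pow _).mul (isUnit_T _)).mul (isUnit_T _)
  -- Pulling a unit into a `finsum` is valid even without finite support.
  rw [pentSum, pentSum, ← finsum_comp_equiv (Equiv.subLeft c)]
  refine Eq.trans ?_
    ((AddMonoidHom.mulLeft _).map_finsum_of_injective hunit.mul_right_injective _).symm
  refine finsum_congr fun j => ?_
  have hT : (T (j - 3 * c * j) * T (t * (c - j)) : R[T;T⁻¹]) =
      T (t * c) * T ((1 - 3 * c - t) * j) := by
    rw [← T_add, ← T_add]; ring_nf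
  simp only [Equiv.subLeft_apply, AddMonoidHom.coe_mulLeft, pentTerm, pentWeight_sub,
    show x - (c - j) = x - c + j by ring, show y + (c - j) = y + c - j by ring]
  linear_combination pentWeight c * pentWeight j * g (y + c - j) * g (x - c + j) * hT

lemma pentSum_swap (g : ℤ → R[T;T⁻¹]) (x y t : ℤ) :
    pentSum g x y t = pentSum g y x (1 - t) := by
  simpa [pentWeight_zero] using pentSum_reflect g x y t 0

variable [NoZeroDivisors R] [CharZero R]

lemma pentSum_add_one_left_neg_one (g : ℤ → R[T;T⁻¹]) (y : ℤ) :
    pentSum g (y + 1) y (-1) = 0 := by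
  have h := pentSum_reflect g (y + 1) y (-1) 1
  rw [pentWeight_one, add_sub_cancel_right, neg_mul, ← T_add] at h
  norm_num at h
  exact CharZero.eq_neg_self_iff.mp h

lemma pentSum_add_one_right_two (g : ℤ → R[T;T⁻¹]) (x : ℤ) :
    pentSum g x (x + 1) 2 = 0 := by
  have h := pentSum_reflect g x (x + 1) 2 (-1)
  rw [pentWeight_neg_one, sub_neg_eq_add, neg_mul, ← T_add] at h
  norm_num at h
  exact CharZero.eq_neg_self_iff.mp h

end Pentagonal

lemma f_eq_pentSum (n : ℕ) (k : ℤ) : f n k = pentSum (qb n) k k 0 := by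
  simp only [pentSum, pentTerm, zero_mul, T_zero, mul_one]
  rfl

lemma pentSum_qb_eq_sum (n : ℕ) {x y N : ℤ} (t : ℤ) (hx : x ≤ N) (hy : y ≤ N) :
    pentSum (qb n) x y t = ∑ j ∈ Icc (-N) N, pentTerm (qb n) x y t j := by
  refine finsum_eq_sum_of_support_subset _ fun j hj => ?_
  rw [coe_Icc, Set.mem_Icc]
  by_contra hout
  apply hj
  rcases (by omega : x - j < 0 ∨ y + j < 0) with h | h
  · simp only [pentTerm, qb_eq_zero_of_neg n h, mul_zero, zero_mul]
  · simp only [pentTerm, qb_eq_zero_of_neg n h, mul_zero]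

lemma one_sub_T_mul_pentTerm_qb_succ (n : ℕ) (k j : ℤ) :
    (1 - T (k + 1)) * pentTerm (qb (n + 1)) (k + 1) (k + 1) 0 j =
      T (2 * k + 2) * (pentTerm (qb n) (k + 1) (k + 1) 0 j - pentTerm (qb n) (k + 1) (k + 1) 1 j)
      + T (k + 1) * (pentTerm (qb n) k (k + 1) 1 j - pentTerm (qb n) (k + 1) k 0 j)
      + T (k + 1) * pentTerm (qb n) (k + 1) k (-1) j
      - T (n + k + 2) * pentTerm (qb n) k (k + 1) 2 j
      + pentTerm (qb n) k k 0 j - T (n + 1) * pentTerm (qb n) k k 1 j := by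
  have hX := qb_succ n (k + 1 - j)
  have hX' := qb_succ' n (k + 1 - j)
  have hY := qb_succ n (k + 1 + j)
  have hQ : (T (k + 1) * T (-j) * T (n + 1 - (k + 1 - j)) : ℤ[T;T⁻¹]) = T (n + 1) := by
    rw [← T_add, ← T_add]; ring_nf
  have huv : (T j * T (-j) : ℤ[T;T⁻¹]) = 1 := by rw [← T_add, add_neg_cancel, T_zero]
  have h2k : (T (2 * k + 2) : ℤ[T;T⁻¹]) = T (k + 1) * T (k + 1) := by rw [← T_add]; ring_nf
  have hnk : (T (n + k + 2) : ℤ[T;T⁻¹]) = T (n + 1) * T (k + 1) := by rw [← T_add]; ring_nf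
  have h2j : (T (2 * j) : ℤ[T;T⁻¹]) = T j * T j := by rw [← T_add, two_mul]
  rw [show k + 1 - j - 1 = k - j by ring, T_sub] at hX
  rw [show k + 1 - j - 1 = k - j by ring] at hX'
  rw [show k + 1 + j - 1 = k + j by ring, T_add] at hY
  simp only [pentTerm, zero_mul, T_zero, mul_one, one_mul, neg_one_mul, h2k, hnk, h2j]
  set P : ℤ[T;T⁻¹] := T (k + 1)
  set Q : ℤ[T;T⁻¹] := T (n + 1)
  set u : ℤ[T;T⁻¹] := T j
  set v : ℤ[T;T⁻¹] := T (-j)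
  set X := qb (n + 1) (k + 1 - j)
  set Y := qb (n + 1) (k + 1 + j)
  set A := qb n (k + 1 - j)
  set A' := qb n (k - j)
  set B := qb n (k + 1 + j)
  -- Expand `1 * X` by the first Pascal recurrence and `q^(k+1) * X` by the second.
  linear_combination pentWeight j * (Y * hX + (P * v * A + A' - P * A - Q * u * A') * hY
    - u * Y * (P * v * hX' + A' * hQ) + (P ^ 2 * A * B - Y * (P * A - P * X)) * huv)

lemma one_sub_T_mul_pentSum_qb_succ (n : ℕ) (k : ℤ) :
    (1 - T (k + 1)) * pentSum (qb (n + 1)) (k + 1) (k + 1) 0 =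
      T (2 * k + 2) * (pentSum (qb n) (k + 1) (k + 1) 0 - pentSum (qb n) (k + 1) (k + 1) 1)
      + T (k + 1) * (pentSum (qb n) k (k + 1) 1 - pentSum (qb n) (k + 1) k 0)
      + T (k + 1) * pentSum (qb n) (k + 1) k (-1)
      - T (n + k + 2) * pentSum (qb n) k (k + 1) 2
      + pentSum (qb n) k k 0 - T (n + 1) * pentSum (qb n) k k 1 := by
  have hk : k ≤ |k| + 1 := by linarith [le_abs_self k]
  have hk1 : k + 1 ≤ |k| + 1 := by linarith [le_abs_self k]
  simp only [pentSum_qb_eq_sum _ _ hk hk, pentSum_qb_eq_sum _ _ hk hk1,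
    pentSum_qb_eq_sum _ _ hk1 hk, pentSum_qb_eq_sum _ _ hk1 hk1, mul_sum, ← sum_sub_distrib,
    ← sum_add_distrib]
  exact sum_congr rfl fun j _ => one_sub_T_mul_pentTerm_qb_succ n k j

lemma one_sub_T_mul_f_succ (n : ℕ) (k : ℤ) :
    (1 - T (k + 1)) * f (n + 1) (k + 1) = (1 - T (n + 1)) * f n k := by
  rw [f_eq_pentSum, f_eq_pentSum, one_sub_T_mul_pentSum_qb_succ,
    pentSum_swap _ (k + 1) (k + 1) 1, pentSum_swap _ k (k + 1) 1, pentSum_swap _ k k 1,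
    pentSum_add_one_left_neg_one, pentSum_add_one_right_two, sub_self]
  ring

lemma f_zero_left (k : ℤ) : f 0 k = qb 0 k := by
  rw [f, finsum_eq_single _ k fun j hj => by simp [qb, sub_eq_zero, Ne.symm hj]]
  obtain rfl | hk := eq_or_ne k 0
  · simp [qb]
  · simp [qb, hk]

lemma f_zero_right (n : ℕ) : f n 0 = 1 := by
  rw [f_eq_pentSum, pentSum_qb_eq_sum n 0 le_rfl le_rfl]
  simp [pentTerm, pentWeight_zero, qb_zero_right]

theorem stmt6 (n : ℕ) (k : ℤ) : f n k = qb n k := by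
  induction n generalizing k with
  | zero => exact f_zero_left k
  | succ n ih =>
    obtain rfl | hk := eq_or_ne k 0
    · rw [f_zero_right, qb_zero_right]
    · obtain ⟨k, rfl⟩ : ∃ m, k = m + 1 := ⟨k - 1, by ring⟩
      apply mul_left_cancel₀ (one_sub_T_ne_zero hk)
      rw [one_sub_T_mul_f_succ, one_sub_T_mul_qb_succ, ih]
end

section
/- Define the second Santos polynomials T_n = Σ_{0 ≤ 2k+1 ≤ n} q^{2k²+2k} [n choose 2k+1]_q. Then for all n ≥ 0, T_{n+2} − (1+q) T_{n+1} + (q − q^{2n+2}) T_n = 0. -/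
open LaurentPolynomial

/-- The second Santos polynomials `T n = Σ_{0 ≤ 2k+1 ≤ n} q^{2k²+2k} [n choose 2k+1]_q`. -/
noncomputable def santosT (n : ℕ) : LaurentPolynomial ℤ :=
  ∑ k ∈ Finset.range ((n + 1) / 2), q ^ (2 * k ^ 2 + 2 * k) * qb n (2 * k + 1)

lemma qb_neg : ∀ (n : ℕ) (k : ℤ), k < 0 → qb n k = 0 := by
  intro n
  induction n with
  | zero => intro k hk; simp [qb]; omega
  | succ n ih =>
      intro k hk
      simp [qb, ih k hk, ih (k-1) (by omega)]

lemma qb_gt : ∀ (n : ℕ) (k : ℤ), (n : ℤ) < k → qb n k = 0 := by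
  intro n
  induction n with
  | zero => intro k hk; simp [qb]; omega
  | succ n ih =>
      intro k hk
      push_cast at hk
      simp [qb, ih k (by omega), ih (k-1) (by omega)]

lemma pascal2 : ∀ (n : ℕ) (k : ℤ),
    qb (n+1) k = qb n k + T ((n : ℤ) + 1 - k) * qb n (k - 1) := by
  intro n
  induction n with
  | zero =>
      intro k
      show T k * qb 0 k + qb 0 (k-1) = qb 0 k + T (0+1-k) * qb 0 (k-1)
      simp only [qb]
      by_cases h0 : k = 0
      · subst h0; simp [T_zero]
      · by_cases h1 : k = 1
        · subst h1; simp [T_zero]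
        · simp [h0, sub_eq_zero, h1]
  | succ n ih =>
      intro k
      have h1 : (T k : LaurentPolynomial ℤ) * T ((n:ℤ)+1-k) = T ((n:ℤ)+1) := by
        rw [← T_add, show k + ((n:ℤ)+1-k) = (n:ℤ)+1 by ring]
      have h2 : (T ((n:ℤ)+1+1-k) : LaurentPolynomial ℤ) * T (k-1) = T ((n:ℤ)+1) := by
        rw [← T_add, show ((n:ℤ)+1+1-k) + (k-1) = (n:ℤ)+1 by ring]
      show T k * qb (n+1) k + qb (n+1) (k-1)
          = qb (n+1) k + T ((n:ℤ)+1+1-k) * qb (n+1) (k-1)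
      conv_rhs => rw [show qb (n+1) k = T k * qb n k + qb n (k-1) from rfl,
        show qb (n+1) (k-1) = T (k-1) * qb n (k-1) + qb n (k-1-1) from rfl]
      rw [ih k, ih (k-1), show ((n:ℤ)+1-(k-1)) = (n:ℤ)+1+1-k by ring]
      linear_combination (qb n (k-1)) * h1 - (qb n (k-1)) * h2

/-- Auxiliary: the first Santos polynomials over an extended range. -/
noncomputable def Saux (n : ℕ) : LaurentPolynomial ℤ :=
  ∑ k ∈ Finset.range (n+2), T (2*(k:ℤ)^2) * qb n (2*k)

lemma santosT_eq (n : ℕ) :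
    santosT n = ∑ k ∈ Finset.range (n+2), T (2*(k:ℤ)^2 + 2*(k:ℤ)) * qb n (2*k+1) := by
  unfold santosT
  rw [Finset.sum_subset (Finset.range_subset_range.2 (by omega : (n+1)/2 ≤ n+2))]
  · apply Finset.sum_congr rfl
    intro k _
    congr 1
    rw [q, T_pow]
    congr 1
    push_cast; ring
  · intro k hk hks
    simp only [Finset.mem_range, not_lt] at hk hks
    rw [qb_gt n _ (by omega), mul_zero]

lemma Trec (n : ℕ) : santosT (n+1) = santosT n + T (n:ℤ) * Saux n := by
  rw [santosT_eq, santosT_eq, Saux]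
  have key : ∀ k ∈ Finset.range (n+1+2),
      T (2*(k:ℤ)^2+2*(k:ℤ)) * qb (n+1) (2*k+1)
      = T (2*(k:ℤ)^2+2*(k:ℤ)) * qb n (2*k+1)
        + T (n:ℤ) * (T (2*(k:ℤ)^2) * qb n (2*k)) := by
    intro k _
    rw [pascal2 n (2*k+1), show ((2:ℤ)*(k:ℤ)+1-1) = 2*(k:ℤ) by ring]
    have hT : (T (2*(k:ℤ)^2+2*(k:ℤ)) : LaurentPolynomial ℤ) * T ((n:ℤ)+1-(2*(k:ℤ)+1))
        = T (n:ℤ) * T (2*(k:ℤ)^2) := by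
      rw [← T_add, ← T_add]; congr 1; ring
    linear_combination (qb n (2*(k:ℤ))) * hT
  rw [Finset.sum_congr rfl key, Finset.sum_add_distrib, ← Finset.mul_sum]
  conv_lhs => rw [show n+1+2 = (n+2)+1 from rfl]
  rw [Finset.sum_range_succ (fun i => T (2*(i:ℤ)^2+2*(i:ℤ)) * qb n (2*(i:ℤ)+1)) (n+2)]
  rw [Finset.sum_range_succ (fun i => T (2*(i:ℤ)^2) * qb n (2*(i:ℤ))) (n+2)]
  rw [qb_gt n (2*((n+2:ℕ):ℤ)+1) (by push_cast; omega),
      qb_gt n (2*((n+2:ℕ):ℤ)) (by push_cast; omega)]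
  ring

lemma Srec (n : ℕ) : Saux (n+1) = Saux n + T ((n:ℤ)+1) * santosT n := by
  rw [Saux, Saux, santosT_eq]
  have key : ∀ k ∈ Finset.range (n+1+2),
      T (2*(k:ℤ)^2) * qb (n+1) (2*k)
      = T (2*(k:ℤ)^2) * qb n (2*k)
        + T (2*(k:ℤ)^2 + (n:ℤ)+1-2*(k:ℤ)) * qb n (2*(k:ℤ)-1) := by
    intro k _
    rw [pascal2 n (2*k)]
    have hT : (T (2*(k:ℤ)^2) : LaurentPolynomial ℤ) * T ((n:ℤ)+1-2*(k:ℤ))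
        = T (2*(k:ℤ)^2 + (n:ℤ)+1-2*(k:ℤ)) := by
      rw [← T_add]; congr 1; ring
    linear_combination (qb n (2*(k:ℤ)-1)) * hT
  rw [Finset.sum_congr rfl key, Finset.sum_add_distrib]
  congr 1
  · rw [show n+1+2 = (n+2)+1 from rfl, Finset.sum_range_succ,
        qb_gt n (2*((n+2:ℕ):ℤ)) (by push_cast; omega)]
    ring
  · rw [show n+1+2 = (n+2)+1 from rfl, Finset.sum_range_succ']
    rw [show ((2:ℤ)*((0:ℕ):ℤ)-1) = -1 by norm_num, qb_neg n (-1) (by norm_num)]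
    rw [mul_zero, add_zero, Finset.mul_sum]
    apply Finset.sum_congr rfl
    intro i _
    have h1 : (2*(((i+1):ℕ):ℤ)^2 + (n:ℤ)+1-2*(((i+1):ℕ):ℤ))
        = ((n:ℤ)+1) + (2*(i:ℤ)^2 + 2*(i:ℤ)) := by push_cast; ring
    have h2 : (2*(((i+1):ℕ):ℤ)-1) = 2*(i:ℤ)+1 := by push_cast; ring
    rw [h1, h2, T_add]
    ring

theorem stmt18 (n : ℕ) :
    santosT (n + 2) - (1 + q) * santosT (n + 1) + (q - q ^ (2 * n + 2)) * santosT n = 0 := by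
  have e1 := Trec (n+1)
  have e2 := Srec n
  have e3 := Trec n
  push_cast at e1 e2 e3
  have hA : (T ((n:ℤ)+1) : LaurentPolynomial ℤ) = q * T (n:ℤ) := by
    rw [q, ← T_add, add_comm]
  have hB : (T ((n:ℤ)+1) : LaurentPolynomial ℤ) * T ((n:ℤ)+1) = q ^ (2*n+2) := by
    rw [q, T_pow, ← T_add]; congr 1; push_cast; ring
  linear_combination e1 + T ((n:ℤ)+1) * e2 - q * e3 + (Saux n) * hA + (santosT n) * hB
end
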